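/- Standard translation theorem: Let M be an n-layered model of an n-layered signature Δⁿ, let k ∈ {0,…,n}, let φ_k ∈ Fm_k(Δⁿ), and let (w_0,…,w_k) be a tuple with D_k(w_0,…,w_k). Then M_k, w_0,…,w_k ⊨_k φ_k if and only if the first-order structure M̄_k (the expansion of the first-order translation M*_k of M_k interpreting the variables x_0,…,x_k as w_0,…,w_k) satisfies the first-order sentence ST^k_{x_0,…,x_k}(φ_k), where ST is the standard translation defined by: ST^k(φ^b_{k−1}) = ST^{k−1}(φ^b_{k−1}); ST^k(p_k) = p_k(x_0,…,x_k); ST^k(i_k) = (i_k = x_k); ST^k(@_{i_k}φ) = D_k(x_0,…,x_{k−1},i_k) ∧ ST^k_{x_0,…,x_{k−1},i_k}(φ); ST^k(◇_kφ) = ∃y_0…y_k (D_k(y_0,…,y_k) ∧ R_k(x_0,…,x_k,y_0,…,y_k) ∧ ST^k_{y_0,…,y_k}(φ)); and ST commutes with ¬ and ∧. -/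
import Mathlib


/-! Layered hybrid logic (R. Neves et al., "A hybrid modal logic for k-layered
transition systems"): signatures, formulas, models, satisfaction. -/

/-- An `n`-layered signature: a family of (disjoint) sets of propositional
symbols and nominals for each level. -/
structure LSig : Type 1 where
  P : ℕ → Type
  N : ℕ → Type

/-- Agreement of two dependent tuples on components `0,…,k`. -/
def agreeUpTo {W : ℕ → Type} (k : ℕ) (w v : ∀ r, W r) : Prop :=
  ∀ r, r ≤ k → w r = v r

theorem agreeUpTo_refl {W : ℕ → Type} (k : ℕ) (w : ∀ r, W r) : agreeUpTo k w w :=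
  fun _ _ => rfl

theorem agreeUpTo_symm {W : ℕ → Type} {k : ℕ} {w v : ∀ r, W r}
    (h : agreeUpTo k w v) : agreeUpTo k v w := fun r hr => (h r hr).symm

theorem agreeUpTo_trans {W : ℕ → Type} {k : ℕ} {w v u : ∀ r, W r}
    (h₁ : agreeUpTo k w v) (h₂ : agreeUpTo k v u) : agreeUpTo k w u :=
  fun r hr => (h₁ r hr).trans (h₂ r hr)

theorem agreeUpTo_mono {W : ℕ → Type} {j k : ℕ} (hjk : j ≤ k) {w v : ∀ r, W r}
    (h : agreeUpTo k w v) : agreeUpTo j w v := fun r hr => h r (hr.trans hjk)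

mutual
  /-- The formulas `Fm_k(Δⁿ)` of level `k`. -/
  inductive LForm (S : LSig) : ℕ → Type
    | base {k : ℕ} : LBasic S k → LForm S (k + 1)
    | nom {k : ℕ} : S.N k → LForm S k
    | prp {k : ℕ} : S.P k → LForm S k
    | neg {k : ℕ} : LForm S k → LForm S k
    | and {k : ℕ} : LForm S k → LForm S k → LForm S k
    | at_ {k : ℕ} : S.N k → LForm S k → LForm S k
    | dia {k : ℕ} : LForm S k → LForm S k
  /-- The basic formulas `φ^b_k` of level `k`. -/
  inductive LBasic (S : LSig) : ℕ → Type
    | nom {k : ℕ} : S.N k → LBasic S k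
    | prp {k : ℕ} : S.P k → LBasic S k
    | lift {k : ℕ} : LBasic S k → LBasic S (k + 1)
    | at_ {k : ℕ} : S.N k → LForm S k → LBasic S k
    | dia {k : ℕ} : LForm S k → LBasic S k
end

/-- An `n`-layered model.  Tuples `(w_0,…,w_k)` are represented as dependent
functions `w : ∀ r, W r` of which only the components `0,…,k` are relevant;
all predicates of the model are required to depend only on the relevant
components (the `_ext` fields).  `Dtop` is the top-level domain predicate
`Dⁿ ⊆ W_0 × ⋯ × W_n`; the lower-level predicates `D_k` are its restrictions
(see `LModel.D`).  `R k` is `R_k ⊆ D_k × D_k`, `VP k p` encodes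
`w_k ∈ V_k^Prop(p, w_0,…,w_{k-1})` and `VN k i` is `V_k^Nom(i)`.
`cover` states `W_k = {v | D_k(w_0,…,w_{k-1},v) for some w's}`. -/
structure LModel (n : ℕ) (S : LSig) where
  W : ℕ → Type
  Dtop : (∀ r, W r) → Prop
  R : ℕ → (∀ r, W r) → (∀ r, W r) → Prop
  VP : ∀ k, S.P k → (∀ r, W r) → Prop
  VN : ∀ k, S.N k → W k
  Dtop_ext : ∀ w w', agreeUpTo n w w' → Dtop w → Dtop w'
  R_sub : ∀ k, k ≤ n → ∀ w v, R k w v →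
    (∃ u, agreeUpTo k u w ∧ Dtop u) ∧ (∃ u, agreeUpTo k u v ∧ Dtop u)
  R_ext : ∀ k, k ≤ n → ∀ w w' v v',
    agreeUpTo k w w' → agreeUpTo k v v' → R k w v → R k w' v'
  VP_ext : ∀ k, k ≤ n → ∀ (p : S.P k) w w', agreeUpTo k w w' → VP k p w → VP k p w'
  cover : ∀ k, k ≤ n → ∀ x : W k, ∃ w, (∃ u, agreeUpTo k u w ∧ Dtop u) ∧ w k = x

/-- `D_k`, the restriction of the domain predicate to the components `0,…,k`. -/
def LModel.D {n : ℕ} {S : LSig} (M : LModel n S) (k : ℕ) (w : ∀ r, M.W r) : Prop :=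
  ∃ u, agreeUpTo k u w ∧ M.Dtop u

theorem LModel.D_restrict {n : ℕ} {S : LSig} (M : LModel n S) {j k : ℕ}
    (hjk : j ≤ k) (w : ∀ r, M.W r) :
    (∃ u, agreeUpTo j u w ∧ M.D k u) ↔ M.D j w := by
  constructor
  · rintro ⟨u, hu, t, ht, htop⟩
    exact ⟨t, agreeUpTo_trans (agreeUpTo_mono hjk ht) hu, htop⟩
  · rintro ⟨t, ht, htop⟩
    exact ⟨t, ht, t, agreeUpTo_refl _ _, htop⟩

/-- The `k`-restriction `M_k` of an `n`-layered model (`k ≤ n`). -/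
def LModel.restrict {n : ℕ} {S : LSig} (M : LModel n S) (k : ℕ) (hk : k ≤ n) :
    LModel k S where
  W := M.W
  Dtop := M.D k
  R := M.R
  VP := M.VP
  VN := M.VN
  Dtop_ext := fun w w' h hD => by
    obtain ⟨u, hu, htop⟩ := hD
    exact ⟨u, agreeUpTo_trans hu h, htop⟩
  R_sub := fun j hj w v hR =>
    ⟨(M.D_restrict hj w).mpr (M.R_sub j (hj.trans hk) w v hR).1,
     (M.D_restrict hj v).mpr (M.R_sub j (hj.trans hk) w v hR).2⟩
  R_ext := fun j hj => M.R_ext j (hj.trans hk)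
  VP_ext := fun j hj => M.VP_ext j (hj.trans hk)
  cover := fun j hj x => by
    obtain ⟨w, hD, hx⟩ := M.cover j (hj.trans hk) x
    exact ⟨w, (M.D_restrict hj w).mpr hD, hx⟩

mutual
  /-- Satisfaction `M_k, w_0,…,w_k ⊨_k φ` (only the components `0,…,k` of `w`
  are relevant). -/
  def LSat {n : ℕ} {S : LSig} (M : LModel n S) :
      ∀ (k : ℕ), LForm S k → (∀ r, M.W r) → Prop
    | _, .base b, w => LBSat M _ b w
    | k, .nom i, w => w k = M.VN k i ∧ M.D k (Function.update w k (M.VN k i))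
    | k, .prp p, w => M.VP k p w
    | k, .neg φ, w => ¬ LSat M k φ w
    | k, .and φ ψ, w => LSat M k φ w ∧ LSat M k ψ w
    | k, .at_ i φ, w => M.D k (Function.update w k (M.VN k i)) ∧
        LSat M k φ (Function.update w k (M.VN k i))
    | k, .dia φ, w => ∃ v, M.R k w v ∧ LSat M k φ v
  /-- Satisfaction of basic formulas. -/
  def LBSat {n : ℕ} {S : LSig} (M : LModel n S) :
      ∀ (k : ℕ), LBasic S k → (∀ r, M.W r) → Prop
    | k, .nom i, w => w k = M.VN k i ∧ M.D k (Function.update w k (M.VN k i))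
    | k, .prp p, w => M.VP k p w
    | _, .lift b, w => LBSat M _ b w
    | k, .at_ i φ, w => M.D k (Function.update w k (M.VN k i)) ∧
        LSat M k φ (Function.update w k (M.VN k i))
    | k, .dia φ, w => ∃ v, M.R k w v ∧ LSat M k φ v
end
/-- First-order terms of sort `r`: variables (indexed per sort by `ℕ`) and one
constant per nominal. -/
inductive LTerm (S : LSig) : ℕ → Type
  | var {r : ℕ} : ℕ → LTerm S r
  | nomc {r : ℕ} : S.N r → LTerm S r

/-- First-order formulas over the translated signature: predicates `D_k`,
`R_k`, `p_k` (whose arguments are term tuples of which only the components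
`0,…,k` matter), equality at each sort, `¬`, `∧`, and existential
quantification over a variable of a given sort. -/
inductive LFO (S : LSig) : Type
  | Dp : (k : ℕ) → (∀ r, LTerm S r) → LFO S
  | Rp : (k : ℕ) → (∀ r, LTerm S r) → (∀ r, LTerm S r) → LFO S
  | prp : {k : ℕ} → S.P k → (∀ r, LTerm S r) → LFO S
  | eq : {r : ℕ} → LTerm S r → LTerm S r → LFO S
  | neg : LFO S → LFO S
  | and : LFO S → LFO S → LFO S
  | ex : (r : ℕ) → ℕ → LFO S → LFO S

/-- Value of a term in the translated model `M*` under an assignment `α`. -/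
def LTerm.val {n : ℕ} {S : LSig} (M : LModel n S) (α : ∀ r, ℕ → M.W r) :
    ∀ {r : ℕ}, LTerm S r → M.W r
  | _, .var m => α _ m
  | _, .nomc i => M.VN _ i

/-- First-order satisfaction in the translated model `M*` under a variable
assignment `α`.  The predicate symbols `D_k`, `R_k` and `p_k` are interpreted
by `M.D k`, `M.R k` and `M.VP k p` respectively (which depend only on the
components `0,…,k` of their arguments). -/
def LFO.Sat {n : ℕ} {S : LSig} (M : LModel n S) :
    (∀ r, ℕ → M.W r) → LFO S → Prop
  | α, .Dp k ts => M.D k fun r => (ts r).val M α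
  | α, .Rp k ts us => M.R k (fun r => (ts r).val M α) fun r => (us r).val M α
  | α, .prp (k := k) p ts => M.VP k p fun r => (ts r).val M α
  | α, .eq t u => t.val M α = u.val M α
  | α, .neg φ => ¬ LFO.Sat M α φ
  | α, .and φ ψ => LFO.Sat M α φ ∧ LFO.Sat M α ψ
  | α, .ex r m φ => ∃ a : M.W r,
      LFO.Sat M (Function.update α r (Function.update (α r) m a)) φ

/-- `exsUpTo m k φ` is `∃ y_0 ⋯ ∃ y_k. φ` where `y_r` is the variable of
index `m` of sort `r`. -/
def exsUpTo {S : LSig} (m : ℕ) : ℕ → LFO S → LFO S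
  | 0, φ => .ex 0 m φ
  | k + 1, φ => exsUpTo m k (.ex (k + 1) m φ)

mutual
  /-- The standard translation `ST^k_{x_0,…,x_k}(φ)`.  The argument
  `x : ∀ r, LTerm S r` provides the current term `x_r` of each sort, and `m`
  is a supply of fresh variable indices (all indices `≥ m` are fresh). -/
  def LForm.st {S : LSig} : ∀ {k : ℕ}, LForm S k → (∀ r, LTerm S r) → ℕ → LFO S
    | _, .base b, x, m => b.st x m
    | k, .nom i, x, _ => .eq (.nomc i) (x k)
    | _, .prp p, x, _ => .prp p x
    | _, .neg φ, x, m => .neg (φ.st x m)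
    | _, .and φ ψ, x, m => .and (φ.st x m) (ψ.st x m)
    | k, .at_ i φ, x, m => .and (.Dp k (Function.update x k (.nomc i)))
        (φ.st (Function.update x k (.nomc i)) m)
    | k, .dia φ, x, m =>
        exsUpTo m k (.and (.Dp k fun _ => .var m)
          (.and (.Rp k x fun _ => .var m) (φ.st (fun _ => .var m) (m + 1))))
  /-- The standard translation of basic formulas. -/
  def LBasic.st {S : LSig} : ∀ {k : ℕ}, LBasic S k → (∀ r, LTerm S r) → ℕ → LFO S
    | k, .nom i, x, _ => .eq (.nomc i) (x k)
    | _, .prp p, x, _ => .prp p x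
    | _, .lift b, x, m => b.st x m
    | k, .at_ i φ, x, m => .and (.Dp k (Function.update x k (.nomc i)))
        (φ.st (Function.update x k (.nomc i)) m)
    | k, .dia φ, x, m =>
        exsUpTo m k (.and (.Dp k fun _ => .var m)
          (.and (.Rp k x fun _ => .var m) (φ.st (fun _ => .var m) (m + 1))))
end

theorem LModel.D_ext {n : ℕ} {S : LSig} (M : LModel n S) {k : ℕ}
    {w w' : ∀ r, M.W r} (h : agreeUpTo k w w') (hD : M.D k w) : M.D k w' := by
  obtain ⟨u, hu, ht⟩ := hD
  exact ⟨u, agreeUpTo_trans hu h, ht⟩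

theorem agreeUpTo_update {W : ℕ → Type} {k : ℕ} {w w' : ∀ r, W r}
    (h : agreeUpTo k w w') (a : W k) :
    agreeUpTo k (Function.update w k a) (Function.update w' k a) := by
  intro r hr
  rcases eq_or_ne r k with rfl | hne
  · simp
  · simpa [Function.update_of_ne hne] using h r hr

mutual
theorem sat_ext {n : ℕ} {S : LSig} (M : LModel n S) :
    ∀ {k : ℕ}, k ≤ n → ∀ (φ : LForm S k) (w w' : ∀ r, M.W r),
      agreeUpTo k w w' → LSat M k φ w → LSat M k φ w'
  | _, hk, .base b, w, w', h, hs =>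
      bsat_ext M (Nat.le_of_succ_le hk) b w w'
        (agreeUpTo_mono (Nat.le_succ _) h) hs
  | k, _, .nom i, w, w', h, hs =>
      ⟨(h k le_rfl).symm.trans hs.1, M.D_ext (agreeUpTo_update h _) hs.2⟩
  | k, hk, .prp p, w, w', h, hs => M.VP_ext k hk p w w' h hs
  | k, hk, .neg φ, w, w', h, hs =>
      fun hs' => hs (sat_ext M hk φ w' w (agreeUpTo_symm h) hs')
  | k, hk, .and φ ψ, w, w', h, hs =>
      ⟨sat_ext M hk φ w w' h hs.1, sat_ext M hk ψ w w' h hs.2⟩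
  | k, hk, .at_ i φ, w, w', h, hs =>
      ⟨M.D_ext (agreeUpTo_update h _) hs.1,
       sat_ext M hk φ _ _ (agreeUpTo_update h _) hs.2⟩
  | k, hk, .dia φ, w, w', h, hs => by
      obtain ⟨v, hR, hv⟩ := hs
      exact ⟨v, M.R_ext k hk w w' v v h (agreeUpTo_refl _ _) hR, hv⟩
theorem bsat_ext {n : ℕ} {S : LSig} (M : LModel n S) :
    ∀ {k : ℕ}, k ≤ n → ∀ (b : LBasic S k) (w w' : ∀ r, M.W r),
      agreeUpTo k w w' → LBSat M k b w → LBSat M k b w'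
  | k, _, .nom i, w, w', h, hs =>
      ⟨(h k le_rfl).symm.trans hs.1, M.D_ext (agreeUpTo_update h _) hs.2⟩
  | k, hk, .prp p, w, w', h, hs => M.VP_ext k hk p w w' h hs
  | _, hk, .lift b, w, w', h, hs =>
      bsat_ext M (Nat.le_of_succ_le hk) b w w'
        (agreeUpTo_mono (Nat.le_succ _) h) hs
  | k, hk, .at_ i φ, w, w', h, hs =>
      ⟨M.D_ext (agreeUpTo_update h _) hs.1,
       sat_ext M hk φ _ _ (agreeUpTo_update h _) hs.2⟩
  | k, hk, .dia φ, w, w', h, hs => by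
      obtain ⟨v, hR, hv⟩ := hs
      exact ⟨v, M.R_ext k hk w w' v v h (agreeUpTo_refl _ _) hR, hv⟩
end
/-- Update the components `0,…,k` of the index-`m` slot of an assignment. -/
def updUpTo {W : ℕ → Type} (α : ∀ r, ℕ → W r) (m k : ℕ) (v : ∀ r, W r) :
    ∀ r, ℕ → W r :=
  fun r => if r ≤ k then Function.update (α r) m (v r) else α r

theorem updUpTo_ne {W : ℕ → Type} (α : ∀ r, ℕ → W r) (m k : ℕ) (v : ∀ r, W r)
    (r j : ℕ) (hj : j ≠ m) : updUpTo α m k v r j = α r j := by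
  unfold updUpTo
  split <;> simp [Function.update_of_ne hj]

theorem updUpTo_m {W : ℕ → Type} (α : ∀ r, ℕ → W r) (m k : ℕ) (v : ∀ r, W r)
    (r : ℕ) (hr : r ≤ k) : updUpTo α m k v r m = v r := by
  simp [updUpTo, hr]

theorem LTerm.val_congr {n : ℕ} {S : LSig} (M : LModel n S) {r m : ℕ}
    (t : LTerm S r) (α α' : ∀ r, ℕ → M.W r)
    (ht : ∀ i, t = .var i → i < m) (hαα : ∀ j, j < m → α' r j = α r j) :
    t.val M α' = t.val M α := by
  cases t with
  | var i => exact hαα i (ht i rfl)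
  | nomc i => rfl

theorem updUpTo_succ {W : ℕ → Type} (α : ∀ r, ℕ → W r) (m k : ℕ)
    (v : ∀ r, W r) (a : W (k + 1)) :
    Function.update (updUpTo α m k v) (k + 1)
        (Function.update (updUpTo α m k v (k + 1)) m a) =
      updUpTo α m (k + 1) (Function.update v (k + 1) a) := by
  have hk1 : ¬ (k + 1 ≤ k) := by omega
  funext r
  rcases eq_or_ne r (k + 1) with rfl | hne
  · simp [updUpTo, hk1]
  · rw [Function.update_of_ne hne]
    unfold updUpTo
    have : (r ≤ k) ↔ (r ≤ k + 1) := by omega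
    rcases le_or_gt r k with h | h
    · simp [h, this.mp h, Function.update_of_ne hne]
    · have h1 : ¬ r ≤ k := by omega
      have h2 : ¬ r ≤ k + 1 := by omega
      simp [h1, h2]

theorem exsUpTo_sat {n : ℕ} {S : LSig} (M : LModel n S) (m : ℕ) :
    ∀ (k : ℕ) (φ : LFO S) (α : ∀ r, ℕ → M.W r),
      LFO.Sat M α (exsUpTo m k φ) ↔
        ∃ v : ∀ r, M.W r, LFO.Sat M (updUpTo α m k v) φ := by
  intro k
  induction k with
  | zero =>
    intro φ α
    show (∃ a : M.W 0, _) ↔ _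
    constructor
    · rintro ⟨a, ha⟩
      refine ⟨Function.update (fun r => α r m) 0 a, ?_⟩
      have : updUpTo α m 0 (Function.update (fun r => α r m) 0 a) =
          Function.update α 0 (Function.update (α 0) m a) := by
        funext r
        rcases eq_or_ne r 0 with rfl | hne
        · simp [updUpTo]
        · have : ¬ r ≤ 0 := by omega
          simp [updUpTo, this, Function.update_of_ne hne]
      rw [this]; exact ha
    · rintro ⟨v, hv⟩
      refine ⟨v 0, ?_⟩
      have : Function.update α 0 (Function.update (α 0) m (v 0)) =
          updUpTo α m 0 v := by
        funext r
        rcases eq_or_ne r 0 with rfl | hne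
        · simp [updUpTo]
        · have : ¬ r ≤ 0 := by omega
          simp [updUpTo, this, Function.update_of_ne hne]
      rw [this]; exact hv
  | succ k ih =>
    intro φ α
    show LFO.Sat M α (exsUpTo m k (.ex (k + 1) m φ)) ↔ _
    rw [ih]
    constructor
    · rintro ⟨v, a, hv⟩
      exact ⟨Function.update v (k + 1) a, by rwa [← updUpTo_succ]⟩
    · rintro ⟨v, hv⟩
      refine ⟨v, v (k + 1), ?_⟩
      rw [updUpTo_succ, Function.update_eq_self]
      exact hv
theorem at_case {n : ℕ} {S : LSig} (M : LModel n S) {k : ℕ}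
    (φ : LForm S k) (i : S.N k) (w : ∀ r, M.W r) (x : ∀ r, LTerm S r)
    (α : ∀ r, ℕ → M.W r) (m : ℕ)
    (hx : ∀ r, r ≤ k → (x r).val M α = w r)
    (hfresh : ∀ r j, x r = LTerm.var j → j < m)
    (IH : ∀ (w' : ∀ r, M.W r) (x' : ∀ r, LTerm S r) (α' : ∀ r, ℕ → M.W r)
      (m' : ℕ), (∀ r, r ≤ k → (x' r).val M α' = w' r) →
      (∀ r j, x' r = LTerm.var j → j < m') → M.D k w' →
      (LSat M k φ w' ↔ LFO.Sat M α' (φ.st x' m'))) :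
    (M.D k (Function.update w k (M.VN k i)) ∧
        LSat M k φ (Function.update w k (M.VN k i))) ↔
      LFO.Sat M α (.and (.Dp k (Function.update x k (.nomc i)))
        (φ.st (Function.update x k (.nomc i)) m)) := by
  set w' := Function.update w k (M.VN k i) with hw'
  set x' := Function.update x k (LTerm.nomc i) with hx'def
  have hx' : ∀ r, r ≤ k → (x' r).val M α = w' r := by
    intro r hr
    rcases eq_or_ne r k with rfl | hne
    · simp [hx'def, hw', LTerm.val]
    · simp only [hx'def, hw', Function.update_of_ne hne]
      exact hx r hr
  have hfresh' : ∀ r j, x' r = LTerm.var j → j < m := by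
    intro r j hj
    rcases eq_or_ne r k with rfl | hne
    · simp [hx'def] at hj
    · exact hfresh r j (by rwa [hx'def, Function.update_of_ne hne] at hj)
  have hagree : agreeUpTo k (fun r => (x' r).val M α) w' := fun r hr => hx' r hr
  constructor
  · rintro ⟨h1, h2⟩
    exact ⟨M.D_ext (agreeUpTo_symm hagree) h1,
      (IH w' x' α m hx' hfresh' h1).mp h2⟩
  · rintro ⟨h1, h2⟩
    have h1' := M.D_ext hagree h1
    exact ⟨h1', (IH w' x' α m hx' hfresh' h1').mpr h2⟩

theorem dia_case {n : ℕ} {S : LSig} (M : LModel n S) {k : ℕ} (hk : k ≤ n)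
    (φ : LForm S k) (w : ∀ r, M.W r) (x : ∀ r, LTerm S r)
    (α : ∀ r, ℕ → M.W r) (m : ℕ)
    (hx : ∀ r, r ≤ k → (x r).val M α = w r)
    (hfresh : ∀ r j, x r = LTerm.var j → j < m)
    (IH : ∀ (w' : ∀ r, M.W r) (x' : ∀ r, LTerm S r) (α' : ∀ r, ℕ → M.W r)
      (m' : ℕ), (∀ r, r ≤ k → (x' r).val M α' = w' r) →
      (∀ r j, x' r = LTerm.var j → j < m') → M.D k w' →
      (LSat M k φ w' ↔ LFO.Sat M α' (φ.st x' m'))) :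
    (∃ v, M.R k w v ∧ LSat M k φ v) ↔
      LFO.Sat M α (exsUpTo m k (.and (.Dp k fun _ => .var m)
        (.and (.Rp k x fun _ => .var m) (φ.st (fun _ => .var m) (m + 1))))) := by
  rw [exsUpTo_sat]
  constructor
  · rintro ⟨v, hR, hv⟩
    refine ⟨v, ?_⟩
    set β := updUpTo α m k v with hβ
    have hxval : ∀ r, (x r).val M β = (x r).val M α := fun r =>
      LTerm.val_congr M (x r) α β (hfresh r)
        (fun j hj => updUpTo_ne α m k v r j (by omega))
    have hDv : M.D k v := (M.R_sub k hk w v hR).2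
    have hagreev : agreeUpTo k v (fun r => β r m) := fun r hr =>
      (updUpTo_m α m k v r hr).symm
    refine ⟨M.D_ext hagreev hDv, ?_, ?_⟩
    · exact M.R_ext k hk w (fun r => (x r).val M β) v (fun r => β r m)
        (fun r hr => (hx r hr).symm.trans (hxval r).symm) hagreev hR
    · exact (IH v (fun _ => .var m) β (m + 1)
        (fun r hr => updUpTo_m α m k v r hr)
        (fun r j hj => by cases hj; omega) hDv).mp hv
  · rintro ⟨v, hD, hR, hv⟩
    set β := updUpTo α m k v with hβ
    have hxval : ∀ r, (x r).val M β = (x r).val M α := fun r =>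
      LTerm.val_congr M (x r) α β (hfresh r)
        (fun j hj => updUpTo_ne α m k v r j (by omega))
    refine ⟨fun r => β r m, ?_, ?_⟩
    · exact M.R_ext k hk (fun r => (x r).val M β) w (fun r => β r m)
        (fun r => β r m) (fun r hr => (hxval r).trans (hx r hr))
        (agreeUpTo_refl _ _) hR
    · exact (IH (fun r => β r m) (fun _ => .var m) β (m + 1)
        (fun r _ => rfl) (fun r j hj => by cases hj; omega) hD).mpr hv
theorem nom_case {n : ℕ} {S : LSig} (M : LModel n S) {k : ℕ}
    (i : S.N k) (w : ∀ r, M.W r) (x : ∀ r, LTerm S r) (α : ∀ r, ℕ → M.W r)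
    (hx : ∀ r, r ≤ k → (x r).val M α = w r) (hw : M.D k w) :
    (w k = M.VN k i ∧ M.D k (Function.update w k (M.VN k i))) ↔
      M.VN k i = (x k).val M α := by
  rw [hx k le_rfl]
  constructor
  · rintro ⟨h1, _⟩; exact h1.symm
  · intro h
    refine ⟨h.symm, ?_⟩
    rw [h, Function.update_eq_self]
    exact hw

theorem prp_case {n : ℕ} {S : LSig} (M : LModel n S) {k : ℕ} (hk : k ≤ n)
    (p : S.P k) (w : ∀ r, M.W r) (x : ∀ r, LTerm S r) (α : ∀ r, ℕ → M.W r)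
    (hx : ∀ r, r ≤ k → (x r).val M α = w r) :
    M.VP k p w ↔ M.VP k p (fun r => (x r).val M α) :=
  ⟨M.VP_ext k hk p w _ (fun r hr => (hx r hr).symm),
   M.VP_ext k hk p _ w (fun r hr => hx r hr)⟩

theorem D_pred {n : ℕ} {S : LSig} (M : LModel n S) {k : ℕ}
    {w : ∀ r, M.W r} (hw : M.D (k + 1) w) : M.D k w := by
  obtain ⟨u, hu, ht⟩ := hw
  exact ⟨u, agreeUpTo_mono (Nat.le_succ _) hu, ht⟩

mutual
theorem st_iff {n : ℕ} {S : LSig} (M : LModel n S) :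
    ∀ {k : ℕ}, k ≤ n → ∀ (φ : LForm S k) (w : ∀ r, M.W r)
      (x : ∀ r, LTerm S r) (α : ∀ r, ℕ → M.W r) (m : ℕ),
      (∀ r, r ≤ k → (x r).val M α = w r) →
      (∀ r j, x r = LTerm.var j → j < m) →
      M.D k w →
      (LSat M k φ w ↔ LFO.Sat M α (φ.st x m))
  | _, hk, .base b, w, x, α, m, hx, hf, hw =>
      bst_iff M (Nat.le_of_succ_le hk) b w x α m
        (fun r hr => hx r (hr.trans (Nat.le_succ _))) hf (D_pred M hw)
  | k, _, .nom i, w, x, α, m, hx, _, hw => nom_case M i w x α hx hw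
  | k, hk, .prp p, w, x, α, m, hx, _, _ => prp_case M hk p w x α hx
  | k, hk, .neg φ, w, x, α, m, hx, hf, hw =>
      not_congr (st_iff M hk φ w x α m hx hf hw)
  | k, hk, .and φ ψ, w, x, α, m, hx, hf, hw =>
      and_congr (st_iff M hk φ w x α m hx hf hw)
        (st_iff M hk ψ w x α m hx hf hw)
  | k, hk, .at_ i φ, w, x, α, m, hx, hf, _ =>
      at_case M φ i w x α m hx hf
        (fun w' x' α' m' hx' hf' hw' => st_iff M hk φ w' x' α' m' hx' hf' hw')
  | k, hk, .dia φ, w, x, α, m, hx, hf, _ =>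
      dia_case M hk φ w x α m hx hf
        (fun w' x' α' m' hx' hf' hw' => st_iff M hk φ w' x' α' m' hx' hf' hw')
theorem bst_iff {n : ℕ} {S : LSig} (M : LModel n S) :
    ∀ {k : ℕ}, k ≤ n → ∀ (b : LBasic S k) (w : ∀ r, M.W r)
      (x : ∀ r, LTerm S r) (α : ∀ r, ℕ → M.W r) (m : ℕ),
      (∀ r, r ≤ k → (x r).val M α = w r) →
      (∀ r j, x r = LTerm.var j → j < m) →
      M.D k w →
      (LBSat M k b w ↔ LFO.Sat M α (b.st x m))
  | k, _, .nom i, w, x, α, m, hx, _, hw => nom_case M i w x α hx hw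
  | k, hk, .prp p, w, x, α, m, hx, _, _ => prp_case M hk p w x α hx
  | _, hk, .lift b, w, x, α, m, hx, hf, hw =>
      bst_iff M (Nat.le_of_succ_le hk) b w x α m
        (fun r hr => hx r (hr.trans (Nat.le_succ _))) hf (D_pred M hw)
  | k, hk, .at_ i φ, w, x, α, m, hx, hf, _ =>
      at_case M φ i w x α m hx hf
        (fun w' x' α' m' hx' hf' hw' => st_iff M hk φ w' x' α' m' hx' hf' hw')
  | k, hk, .dia φ, w, x, α, m, hx, hf, _ =>
      dia_case M hk φ w x α m hx hf
        (fun w' x' α' m' hx' hf' hw' => st_iff M hk φ w' x' α' m' hx' hf' hw')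
end

/-- **Standard translation theorem.**  For an `n`-layered model `M`, `k ≤ n`,
a formula `φ` of `Fm_k(Δⁿ)` and a tuple `w` with `D_k(w_0,…,w_k)`:
`M_k, w_0,…,w_k ⊨_k φ` iff the expansion of the first-order translation of
`M_k` interpreting the variables `x_0,…,x_k` (the variables of index `0` of
each sort) as `w_0,…,w_k` satisfies `ST^k_{x_0,…,x_k}(φ)`. -/
theorem standard_translation {n : ℕ} {S : LSig} (M : LModel n S)
    (k : ℕ) (hk : k ≤ n) (φ : LForm S k) (w : ∀ r, M.W r) (hw : M.D k w)
    (α : ∀ r, ℕ → M.W r) (hα : ∀ r, r ≤ k → α r 0 = w r) :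
    LSat M k φ w ↔ LFO.Sat M α (φ.st (fun _ => .var 0) 1) := by
  exact st_iff M hk φ w (fun _ => .var 0) α 1 (fun r hr => hα r hr)
    (fun _ j hj => by cases hj; omega) hw
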